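/- arXiv:q-alg/9611004 — 2 statements merged into one kernel-verified Lean document; each statement's English description precedes it below -/
import Mathlib

section
/- Let ω be a positive linear functional on A with Gel'fand ideal J_ω, and let H_ω := A/J_ω with canonical projection f ↦ Ψ_f. Then ⟨Ψ_f, Ψ_g⟩ := ω(f̄*g) is a well-defined map on H_ω × H_ω (independent of the chosen representatives), is conjugate-symmetric, ℂ((λ))-linear in the second argument, and positive definite: ⟨Ψ_f, Ψ_f⟩ ∈ ℝ((λ)), ⟨Ψ_f, Ψ_f⟩ ≥ 0, and ⟨Ψ_f, Ψ_f⟩ = 0 iff Ψ_f = 0. -/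
/-- Coefficientwise complex conjugation on `ℂ((λ))`. -/
noncomputable def conjL (x : LaurentSeries ℂ) : LaurentSeries ℂ where
  coeff := fun m => (starRingEnd ℂ) (x.coeff m)
  isPWO_support' := by
    refine x.isPWO_support.mono ?_
    intro m hm
    simp only [Function.mem_support, ne_eq, map_eq_zero] at hm ⊢
    exact hm

/-- An element of `ℂ((λ))` lies in `ℝ((λ))` and is `≥ 0` there: all coefficients are
real, and either it is `0` or the coefficient of the lowest nonvanishing power of `λ`
is positive. -/
noncomputable def IsRealNonneg (x : LaurentSeries ℂ) : Prop :=
  (∀ m, (x.coeff m).im = 0) ∧ (x = 0 ∨ 0 < (x.coeff x.order).re)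

/-!
Conjugate symmetry comes from polarization: `ω(f̄ f)` is real along the lines `f + g` and
`f + i g`. The key point is the Cauchy–Schwarz-type fact that `ω(f̄ f) = 0` forces
`ω(f̄ g) = 0` for all `g`; in the non-Archimedean field `ℂ((λ))` it follows by evaluating
`ω` on `f + c g` for `c = -λᴺ · conj(ω(f̄ g))` with `N` so large that the term quadratic
in `c` is negligible, which gives an element with negative leading coefficient.
Well-definedness on `A ⧸ J_ω` then follows by bilinearity.
-/

open HahnSeries ComplexConjugate

instance : CharZero (LaurentSeries ℂ) :=
  ((C : ℂ →+* LaurentSeries ℂ).charZero_iff C_injective).1 inferInstance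

@[simp]
lemma conjL_coeff (x : LaurentSeries ℂ) (m : ℤ) : (conjL x).coeff m = conj (x.coeff m) := rfl

@[simp]
lemma conjL_conjL (x : LaurentSeries ℂ) : conjL (conjL x) = x := by
  ext; simp

@[simp]
lemma conjL_zero : conjL 0 = 0 := by
  ext; simp

@[simp]
lemma conjL_add (x y : LaurentSeries ℂ) : conjL (x + y) = conjL x + conjL y := by
  ext; simp

@[simp]
lemma conjL_neg (x : LaurentSeries ℂ) : conjL (-x) = -conjL x := by
  ext; simp

@[simp]
lemma conjL_mul (x y : LaurentSeries ℂ) : conjL (x * y) = conjL x * conjL y :=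
  HahnSeries.map_mul (starRingEnd ℂ).toNonUnitalRingHom

@[simp]
lemma conjL_single (n : ℤ) (z : ℂ) : conjL (single n z) = single n (conj z) := by
  ext m
  rw [conjL_coeff, coeff_single, coeff_single]
  split_ifs <;> simp

@[simp]
lemma conjL_one : conjL 1 = 1 := by
  simpa using conjL_single 0 1

lemma order_conjL (x : LaurentSeries ℂ) : (conjL x).order = x.order := by
  have key : ∀ y : LaurentSeries ℂ, y ≠ 0 → (conjL y).order ≤ y.order := fun y hy =>
    order_le_of_coeff_ne_zero (by simpa using coeff_order_eq_zero.not.2 hy)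
  rcases eq_or_ne x 0 with rfl | hx
  · simp
  · refine le_antisymm (key x hx) ?_
    simpa using key (conjL x) (fun h => hx (by simpa using congrArg conjL h))

@[simp]
lemma leadingCoeff_conjL (x : LaurentSeries ℂ) : (conjL x).leadingCoeff = conj x.leadingCoeff := by
  rw [leadingCoeff_eq, leadingCoeff_eq, order_conjL, conjL_coeff]

lemma IsRealNonneg.conjL_eq {x : LaurentSeries ℂ} (hx : IsRealNonneg x) : conjL x = x := by
  ext m
  exact Complex.conj_eq_iff_im.2 (hx.1 m)

lemma IsRealNonneg.re_leadingCoeff_nonneg {x : LaurentSeries ℂ} (hx : IsRealNonneg x) :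
    0 ≤ x.leadingCoeff.re := by
  rcases hx.2 with rfl | hpos
  · simp
  · exact leadingCoeff_eq (x := x) ▸ hpos.le

-- With `t = λ^(1 - ord b)` and `c = -t ā` the expression is `t ā a (-2 + t b)`, where `t b`
-- has positive order, so its leading coefficient is `-2 |a₀|² < 0`.
lemma eq_zero_of_forall_isRealNonneg {a b : LaurentSeries ℂ}
    (h : ∀ c, IsRealNonneg (c * a + conjL c * conjL a + conjL c * c * b)) : a = 0 := by
  by_contra ha
  set t : LaurentSeries ℂ := single (1 - b.order) 1 with ht
  have hconj_t : conjL t = t := by simp [ht]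
  have hleading_u : (-2 + t * b).leadingCoeff = -2 := by
    have h2 : (-2 : LaurentSeries ℂ) = single 0 (-2) := by rw [← C_apply, map_neg, map_ofNat]
    rw [h2, leadingCoeff_add_eq_left, leadingCoeff_of_single]
    rw [orderTop_single (by norm_num)]
    rcases eq_or_ne b 0 with rfl | hb
    · simp
    · refine zero_lt_orderTop_of_order ?_
      rw [order_mul (single_ne_zero one_ne_zero) hb, order_single one_ne_zero]
      omega
  have hexpr : -(t * conjL a) * a + conjL (-(t * conjL a)) * conjL a
      + conjL (-(t * conjL a)) * -(t * conjL a) * b = t * (conjL a * a) * (-2 + t * b) := by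
    simp only [conjL_neg, conjL_mul, conjL_conjL, hconj_t]
    ring
  have hnonneg := (h (-(t * conjL a))).re_leadingCoeff_nonneg
  rw [hexpr, leadingCoeff_mul, leadingCoeff_mul, leadingCoeff_mul, hleading_u, leadingCoeff_conjL,
    ← Complex.normSq_eq_conj_mul_self, ht, leadingCoeff_of_single] at hnonneg
  have hpos := Complex.normSq_pos.2 (leadingCoeff_ne_zero.2 ha)
  simp only [one_mul, mul_neg, Complex.neg_re, Complex.mul_re, Complex.ofReal_re, Complex.re_ofNat,
    Complex.ofReal_im, Complex.im_ofNat, mul_zero, sub_zero, Left.nonneg_neg_iff] at hnonneg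
  linarith

section StarAlgebra

variable {A : Type*} [Ring A] [Algebra (LaurentSeries ℂ) A] [StarRing A]
  (ω : A →ₗ[LaurentSeries ℂ] LaurentSeries ℂ)
  (hsm : ∀ (c : LaurentSeries ℂ) (a : A), star (c • a) = conjL c • star a)
include hsm

lemma apply_star_add_smul_mul_add_smul (f g : A) (c : LaurentSeries ℂ) :
    ω (star (f + c • g) * (f + c • g)) =
      ω (star f * f) + c * ω (star f * g) + conjL c * ω (star g * f)
        + conjL c * c * ω (star g * g) := by
  rw [star_add, hsm]
  simp only [add_mul, mul_add, smul_mul_assoc, mul_smul_comm, map_add, map_smul,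
    smul_eq_mul]
  ring

variable (hpos : ∀ f : A, IsRealNonneg (ω (star f * f)))
include hpos

lemma conjL_apply_star_mul (f g : A) : conjL (ω (star f * g)) = ω (star g * f) := by
  set i : LaurentSeries ℂ := single 0 Complex.I
  have hi_conj : conjL i = -i := by simp [i]
  have hii : i * i = -1 := by simp [i, single_mul_single]
  have hreal (c : LaurentSeries ℂ) := (hpos (f + c • g)).conjL_eq
  have h1 := hreal 1
  have hI := hreal i
  simp only [apply_star_add_smul_mul_add_smul ω hsm, conjL_add, conjL_mul, conjL_one, hi_conj,
    conjL_neg, (hpos f).conjL_eq, (hpos g).conjL_eq] at h1 hI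
  linear_combination (h1 + i * hI + (conjL (ω (star f * g)) - conjL (ω (star g * f))
    + ω (star f * g) - ω (star g * f)) * hii) / 2

lemma apply_star_mul_eq_zero_of_apply_star_mul_self_eq_zero {f : A} (hf : ω (star f * f) = 0)
    (g : A) : ω (star f * g) = 0 := by
  refine eq_zero_of_forall_isRealNonneg (b := ω (star g * g)) fun c => ?_
  have h := hpos (f + c • g)
  rwa [apply_star_add_smul_mul_add_smul ω hsm, hf, zero_add,
    ← conjL_apply_star_mul ω hsm hpos f g] at h

end StarAlgebra

/-- On the GNS space `H_ω = A ⧸ J_ω` (where `J_ω` is the Gel'fand ideal, given as a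
submodule), the formula `⟨Ψ_f, Ψ_g⟩ := ω(f̄*g)` is well defined (independent of the
representatives), conjugate-symmetric, `ℂ((λ))`-linear in the second argument, and
positive definite. -/
theorem gns_inner_product_well_defined
    {A : Type*} [Ring A] [Algebra (LaurentSeries ℂ) A] [StarRing A]
    (hsm : ∀ (c : LaurentSeries ℂ) (a : A), star (c • a) = conjL c • star a)
    (ω : A →ₗ[LaurentSeries ℂ] LaurentSeries ℂ)
    (hpos : ∀ f : A, IsRealNonneg (ω (star f * f)))
    (J : Submodule (LaurentSeries ℂ) A)
    (hJ : ∀ f : A, f ∈ J ↔ ω (star f * f) = 0) :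
    -- well defined on the quotient H_ω = A ⧸ J
    (∀ f f' g g' : A,
        (Submodule.Quotient.mk f : A ⧸ J) = Submodule.Quotient.mk f' →
        (Submodule.Quotient.mk g : A ⧸ J) = Submodule.Quotient.mk g' →
        ω (star f * g) = ω (star f' * g')) ∧
    -- conjugate symmetric
    (∀ f g : A, ω (star f * g) = conjL (ω (star g * f))) ∧
    -- ℂ((λ))-linear in the second argument
    (∀ (f g h : A) (c : LaurentSeries ℂ),
        ω (star f * (c • g + h)) = c * ω (star f * g) + ω (star f * h)) ∧
    -- positive definite
    (∀ f : A, IsRealNonneg (ω (star f * f)) ∧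
        (ω (star f * f) = 0 ↔ (Submodule.Quotient.mk f : A ⧸ J) = 0)) := by
  have hnull {f : A} (hf : f ∈ J) (g : A) : ω (star f * g) = 0 :=
    apply_star_mul_eq_zero_of_apply_star_mul_self_eq_zero ω hsm hpos ((hJ f).1 hf) g
  refine ⟨fun f f' g g' hf hg => ?_, fun f g => (conjL_apply_star_mul ω hsm hpos g f).symm,
    fun f g h c => by rw [mul_add, mul_smul_comm, map_add, map_smul, smul_eq_mul],
    fun f => ⟨hpos f, by rw [Submodule.Quotient.mk_eq_zero, hJ]⟩⟩
  rw [Submodule.Quotient.eq] at hf hg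
  have hright : ω (star f' * (g - g')) = 0 := by
    rw [← conjL_apply_star_mul ω hsm hpos, hnull hg, conjL_zero]
  calc ω (star f * g) = ω (star (f - f') * g) + ω (star f' * (g - g')) + ω (star f' * g') := by
        rw [star_sub, sub_mul, mul_sub, map_sub, map_sub]
        ring
    _ = ω (star f' * g') := by rw [hnull hf, hright, zero_add, zero_add]
end

section
/- The functional ω₀ is positive on (C^∞(T*ℝ^n)_{ℝ^n}((λ)), ⋆): for every f ∈ C^∞(T*ℝ^n)_{ℝ^n}((λ)), ω₀(f̄ ⋆ f) lies in ℝ((λ)) and ω₀(f̄ ⋆ f) ≥ 0 with respect to the order on ℝ((λ)) in which x > 0 iff the coefficient of the lowest nonvanishing power of λ in x is positive. -/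
open MeasureTheory

/-- Phase space `T*ℝ^n ≅ ℝ^n × ℝ^n`, coordinates `(q, p)`. -/
abbrev Phase (n : ℕ) := (Fin n → ℝ) × (Fin n → ℝ)

/-- Directional (partial) derivative in direction `v`. -/
noncomputable def pd {E : Type*} [NormedAddCommGroup E] [NormedSpace ℝ E]
    (v : E) (f : E → ℂ) : E → ℂ :=
  fun z => fderiv ℝ f z v

/-- Unit vector in the `q^k` direction. -/
noncomputable def eQ (n : ℕ) (k : Fin n) : Phase n := (Pi.single k 1, 0)
/-- Unit vector in the `p_k` direction. -/
noncomputable def eP (n : ℕ) (k : Fin n) : Phase n := (0, Pi.single k 1)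

/-- The operator `Σ_k (∂_{q^k}∂_{p'_k} − ∂_{p_k}∂_{q'^k})` on functions of the
doubled variables `((q,p),(q',p'))`. -/
noncomputable def Dop (n : ℕ) (F : Phase n × Phase n → ℂ) : Phase n × Phase n → ℂ :=
  fun z => ∑ k : Fin n,
    (pd (eQ n k, 0) (pd ((0 : Phase n), eP n k) F) z
      - pd (eP n k, 0) (pd ((0 : Phase n), eQ n k) F) z)

/-- The bidifferential operators `M_r` of the Weyl star product:
`M_r(f,g) = (Σ_k (∂_{q^k}∂_{p'_k} − ∂_{p_k}∂_{q'^k}))^r (f(q,p)g(q',p'))|_{q'=q,p'=p}`. -/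
noncomputable def Mop (n : ℕ) (r : ℕ) (f g : Phase n → ℂ) : Phase n → ℂ :=
  fun x => (Dop n)^[r] (fun z => f z.1 * g z.2) (x, x)

/-- The Weyl star product `f ⋆ g := Σ_{r≥0} (1/r!)(iλ/2)^r M_r(f,g)`, extended
`ℂ((λ))`-bilinearly to formal Laurent series in `λ` with smooth coefficients; a
series is encoded by its coefficient function `ℤ → (Phase n → ℂ)`. -/
noncomputable def weylStar (n : ℕ) (F G : ℤ → Phase n → ℂ) : ℤ → Phase n → ℂ :=
  fun m => ∑ᶠ (r : ℕ), ∑ᶠ (a : ℤ),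
    (((r.factorial : ℂ)⁻¹ * (Complex.I / 2) ^ r) • Mop n r (F a) (G (m - (r : ℤ) - a)))

/-- The operator `Δ := Σ_k ∂²/∂q^k∂p_k`. -/
noncomputable def DeltaOp (n : ℕ) (f : Phase n → ℂ) : Phase n → ℂ :=
  fun x => ∑ k : Fin n, pd (eQ n k) (pd (eP n k) f) x

/-- The operator `exp(c·λ·Δ)` acting coefficientwise on Laurent series of smooth
functions. -/
noncomputable def expDelta (n : ℕ) (c : ℂ) (F : ℤ → Phase n → ℂ) : ℤ → Phase n → ℂ :=
  fun m => ∑ᶠ (r : ℕ), (((r.factorial : ℂ)⁻¹ * c ^ r) • (DeltaOp n)^[r] (F (m - (r : ℤ))))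

/-- `S := exp(−(iλ/2)Δ)`. -/
noncomputable def Sop (n : ℕ) : (ℤ → Phase n → ℂ) → ℤ → Phase n → ℂ :=
  expDelta n (-(Complex.I / 2))

/-- `S̄ := exp(+(iλ/2)Δ)`, the conjugate operator of `S`. -/
noncomputable def SbarOp (n : ℕ) : (ℤ → Phase n → ℂ) → ℤ → Phase n → ℂ :=
  expDelta n (Complex.I / 2)

/-- Coefficientwise conjugation of a Laurent series of functions (`λ` is real). -/
noncomputable def conjSeries (n : ℕ) (F : ℤ → Phase n → ℂ) : ℤ → Phase n → ℂ :=
  fun m x => (starRingEnd ℂ) (F m x)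

/-- A formal Laurent series in `λ` with smooth coefficients: all coefficients smooth
and only finitely many negative powers. -/
def IsLaurentSmooth (n : ℕ) (F : ℤ → Phase n → ℂ) : Prop :=
  (∀ m, ContDiff ℝ (⊤ : ℕ∞) (F m)) ∧ ∃ N : ℤ, ∀ m : ℤ, m < N → F m = 0

/-- The zero section `i(ℝ^n) ⊂ T*ℝ^n`. -/
def zeroSection (n : ℕ) : Set (Phase n) := {x | x.2 = 0}

/-- An element of `C^∞(T*ℝ^n)_{ℝ^n}((λ))`: a Laurent series of smooth functions whose
supports have compact intersection with the zero section. -/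
def IsLaurentCS (n : ℕ) (F : ℤ → Phase n → ℂ) : Prop :=
  IsLaurentSmooth n F ∧ ∀ m, IsCompact (tsupport (F m) ∩ zeroSection n)

/-- `ω₀(f) := ∫_{ℝ^n} i^*f d^n q`, coefficientwise on Laurent series. -/
noncomputable def omega0 (n : ℕ) (F : ℤ → Phase n → ℂ) : ℤ → ℂ :=
  fun m => ∫ q : Fin n → ℝ, F m (q, 0)

/-- A Laurent series (of constants) lies in `ℝ((λ))` and is `≥ 0` there. -/
def LaurentNonneg (c : ℤ → ℂ) : Prop :=
  (∀ m, (c m).im = 0) ∧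
    (c = 0 ∨ ∃ m₀ : ℤ, (∀ m, m < m₀ → c m = 0) ∧ 0 < (c m₀).re)

/-- Pull-back `π^*` of a Laurent series of functions on `ℝ^n` to phase space. -/
def pullSeries (n : ℕ) (Φ : ℤ → (Fin n → ℝ) → ℂ) : ℤ → Phase n → ℂ :=
  fun m x => Φ m x.1

/-- A function of phase space, viewed as a Laurent series concentrated in degree 0. -/
noncomputable def constSeries (n : ℕ) (f : Phase n → ℂ) : ℤ → Phase n → ℂ :=
  fun m => if m = 0 then f else 0

/-- The momentum coordinate function `p_k`. -/
noncomputable def momentum (n : ℕ) (k : Fin n) : Phase n → ℂ :=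
  fun x => (x.2 k : ℂ)

section PD
variable {E : Type*} [NormedAddCommGroup E] [NormedSpace ℝ E]

lemma pd_contDiff {f : E → ℂ} (hf : ContDiff ℝ (⊤ : ℕ∞) f) (v : E) : ContDiff ℝ (⊤ : ℕ∞) (pd v f) :=
  (hf.fderiv_right (by simp)).clm_apply contDiff_const

lemma pd_zero (v : E) : pd v (0 : E → ℂ) = 0 := by
  funext x
  have : (0 : E → ℂ) = fun _ => (0 : ℂ) := rfl
  simp [pd, this]

lemma pd_sub {f g : E → ℂ} (hf : Differentiable ℝ f) (hg : Differentiable ℝ g) (v : E) :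
    pd v (f - g) = pd v f - pd v g := by
  funext x
  have : (f - g) = fun y => f y - g y := rfl
  simp [pd, this, fderiv_fun_sub (hf x) (hg x)]

lemma pd_finset_sum {ι : Type*} (s : Finset ι) (H : ι → E → ℂ)
    (h : ∀ i ∈ s, Differentiable ℝ (H i)) (v : E) :
    pd v (∑ i ∈ s, H i) = ∑ i ∈ s, pd v (H i) := by
  funext x
  have h1 : (∑ i ∈ s, H i) = fun y => ∑ i ∈ s, H i y := by
    funext y; simp
  have h2 : fderiv ℝ (fun y => ∑ i ∈ s, H i y) x = ∑ i ∈ s, fderiv ℝ (H i) x :=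
    fderiv_fun_sum (fun i hi => (h i hi) x)
  simp [pd, h1, h2]

lemma pd_pd_eq {f : E → ℂ} (hf : ContDiff ℝ (⊤ : ℕ∞) f) (v w : E) (x : E) :
    pd v (pd w f) x = fderiv ℝ (fderiv ℝ f) x v w := by
  have hdf : DifferentiableAt ℝ (fderiv ℝ f) x :=
    ((hf.fderiv_right (m := (⊤ : ℕ∞)) (by simp)).differentiable (by simp)).differentiableAt
  have h1 : pd w f = fun y => (fderiv ℝ f y) w := rfl
  rw [pd, h1, fderiv_clm_apply hdf (differentiableAt_const w)]
  simp

lemma pd_comm {f : E → ℂ} (hf : ContDiff ℝ (⊤ : ℕ∞) f) (v w : E) : pd v (pd w f) = pd w (pd v f) := by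
  funext x
  rw [pd_pd_eq hf, pd_pd_eq hf]
  exact (hf.contDiffAt.isSymmSndFDerivAt (by simp [minSmoothness_of_isRCLikeNormedField]; exact WithTop.coe_le_coe.mpr le_top)).eq v w

lemma support_pd_subset (v : E) (f : E → ℂ) : Function.support (pd v f) ⊆ tsupport f := by
  intro x hx
  by_contra hxt
  have h0 : f =ᶠ[nhds x] 0 :=
    Filter.eventually_of_mem ((isClosed_tsupport f).isOpen_compl.mem_nhds hxt)
      (fun y hy => image_eq_zero_of_notMem_tsupport hy)
  have : fderiv ℝ f x = fderiv ℝ (0 : E → ℂ) x := h0.fderiv_eq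
  have h2 : (0 : E → ℂ) = fun _ => (0 : ℂ) := rfl
  rw [h2] at this
  simp only [fderiv_fun_const] at this
  apply hx
  simp [pd, this]

lemma tsupport_pd_subset (v : E) (f : E → ℂ) : tsupport (pd v f) ⊆ tsupport f :=
  closure_minimal (support_pd_subset v f) (isClosed_tsupport f)

lemma pd_conj {f : E → ℂ} (hf : Differentiable ℝ f) (v : E) :
    pd v (fun y => (starRingEnd ℂ) (f y)) = fun y => (starRingEnd ℂ) (pd v f y) := by
  funext x
  have h1 : (fun y => (starRingEnd ℂ) (f y)) = (Complex.conjCLE : ℂ → ℂ) ∘ f := rfl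
  have h2 : HasFDerivAt ((Complex.conjCLE : ℂ →L[ℝ] ℂ) : ℂ → ℂ)
      ((Complex.conjCLE : ℂ →L[ℝ] ℂ)) (f x) :=
    (Complex.conjCLE : ℂ →L[ℝ] ℂ).hasFDerivAt
  have h3 : HasFDerivAt (fun y => (starRingEnd ℂ) (f y))
      (((Complex.conjCLE : ℂ →L[ℝ] ℂ)).comp (fderiv ℝ f x)) x := by
    exact h2.comp x (hf x).hasFDerivAt
  simp [pd, h3.fderiv]

lemma conj_contDiff {f : E → ℂ} (hf : ContDiff ℝ (⊤ : ℕ∞) f) :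
    ContDiff ℝ (⊤ : ℕ∞) (fun y => (starRingEnd ℂ) (f y)) :=
  Complex.conjCLE.contDiff.comp hf

end PD
section Ops
variable {n : ℕ}

lemma DeltaOp_contDiff {f : Phase n → ℂ} (hf : ContDiff ℝ (⊤ : ℕ∞) f) : ContDiff ℝ (⊤ : ℕ∞) (DeltaOp n f) :=
  ContDiff.sum fun k _ => pd_contDiff (pd_contDiff hf (eP n k)) (eQ n k)

lemma DeltaIter_contDiff {f : Phase n → ℂ} (hf : ContDiff ℝ (⊤ : ℕ∞) f) (s : ℕ) :
    ContDiff ℝ (⊤ : ℕ∞) ((DeltaOp n)^[s] f) := by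
  induction s with
  | zero => exact hf
  | succ s ih => rw [Function.iterate_succ_apply']; exact DeltaOp_contDiff ih

lemma DeltaOp_zero : DeltaOp n (0 : Phase n → ℂ) = 0 := by
  funext x; simp [DeltaOp, pd_zero]

lemma DeltaIter_zero (s : ℕ) : (DeltaOp n)^[s] (0 : Phase n → ℂ) = 0 := by
  induction s with
  | zero => rfl
  | succ s ih => rw [Function.iterate_succ_apply', ih, DeltaOp_zero]

lemma tsupport_DeltaOp_subset (f : Phase n → ℂ) : tsupport (DeltaOp n f) ⊆ tsupport f := by
  apply closure_minimal _ (isClosed_tsupport f)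
  intro x hx
  obtain ⟨k, -, hk⟩ := Finset.exists_ne_zero_of_sum_ne_zero hx
  exact tsupport_pd_subset _ _ (tsupport_pd_subset _ _ (subset_closure hk))

lemma tsupport_DeltaIter_subset (f : Phase n → ℂ) (s : ℕ) :
    tsupport ((DeltaOp n)^[s] f) ⊆ tsupport f := by
  induction s with
  | zero => exact subset_rfl
  | succ s ih =>
    rw [Function.iterate_succ_apply']
    exact (tsupport_DeltaOp_subset _).trans ih

lemma DeltaOp_conj {f : Phase n → ℂ} (hf : ContDiff ℝ (⊤ : ℕ∞) f) :
    DeltaOp n (fun y => (starRingEnd ℂ) (f y)) = fun y => (starRingEnd ℂ) (DeltaOp n f y) := by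
  funext x
  have hdiff : Differentiable ℝ f := hf.differentiable (by simp)
  simp only [DeltaOp]
  rw [map_sum]
  refine Finset.sum_congr rfl fun k _ => ?_
  rw [pd_conj hdiff (eP n k),
    pd_conj ((pd_contDiff hf (eP n k)).differentiable (by simp)) (eQ n k)]

lemma DeltaIter_conj {f : Phase n → ℂ} (hf : ContDiff ℝ (⊤ : ℕ∞) f) (s : ℕ) :
    (DeltaOp n)^[s] (fun y => (starRingEnd ℂ) (f y)) =
      fun y => (starRingEnd ℂ) ((DeltaOp n)^[s] f y) := by
  induction s with
  | zero => rfl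
  | succ s ih =>
    rw [Function.iterate_succ_apply', Function.iterate_succ_apply', ih,
      DeltaOp_conj (DeltaIter_contDiff hf s)]

/-- elementary tensor -/
noncomputable def tens (f g : Phase n → ℂ) : Phase n × Phase n → ℂ := fun z => f z.1 * g z.2

lemma Mop_eq_tens (r : ℕ) (f g : Phase n → ℂ) (x : Phase n) :
    Mop n r f g x = (Dop n)^[r] (tens f g) (x, x) := rfl

lemma tens_contDiff {f g : Phase n → ℂ} (hf : ContDiff ℝ (⊤ : ℕ∞) f) (hg : ContDiff ℝ (⊤ : ℕ∞) g) :
    ContDiff ℝ (⊤ : ℕ∞) (tens f g) :=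
  (hf.comp contDiff_fst).mul (hg.comp contDiff_snd)

lemma tens_zero_left (g : Phase n → ℂ) : tens (0 : Phase n → ℂ) g = 0 := by
  funext z; simp [tens]

lemma tens_zero_right (f : Phase n → ℂ) : tens f (0 : Phase n → ℂ) = 0 := by
  funext z; simp [tens]

lemma hasFDerivAt_tens {f g : Phase n → ℂ} (hf : ContDiff ℝ (⊤ : ℕ∞) f) (hg : ContDiff ℝ (⊤ : ℕ∞) g)
    (z : Phase n × Phase n) :
    HasFDerivAt (tens f g)
      (f z.1 • ((fderiv ℝ g z.2).comp (ContinuousLinearMap.snd ℝ (Phase n) (Phase n)))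
        + g z.2 • ((fderiv ℝ f z.1).comp (ContinuousLinearMap.fst ℝ (Phase n) (Phase n)))) z := by
  have h1 : HasFDerivAt (fun z : Phase n × Phase n => f z.1)
      ((fderiv ℝ f z.1).comp (ContinuousLinearMap.fst ℝ (Phase n) (Phase n))) z :=
    ((hf.differentiable (by simp) z.1).hasFDerivAt).comp z hasFDerivAt_fst
  have h2 : HasFDerivAt (fun z : Phase n × Phase n => g z.2)
      ((fderiv ℝ g z.2).comp (ContinuousLinearMap.snd ℝ (Phase n) (Phase n))) z :=
    ((hg.differentiable (by simp) z.2).hasFDerivAt).comp z hasFDerivAt_snd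
  exact h1.mul h2

lemma pd_tens_left {f g : Phase n → ℂ} (hf : ContDiff ℝ (⊤ : ℕ∞) f) (hg : ContDiff ℝ (⊤ : ℕ∞) g) (v : Phase n) :
    pd (v, (0 : Phase n)) (tens f g) = tens (pd v f) g := by
  funext z
  have h3 := hasFDerivAt_tens hf hg z
  simp only [pd, h3.fderiv, tens]
  simp [mul_comm]

lemma pd_tens_right {f g : Phase n → ℂ} (hf : ContDiff ℝ (⊤ : ℕ∞) f) (hg : ContDiff ℝ (⊤ : ℕ∞) g) (w : Phase n) :
    pd ((0 : Phase n), w) (tens f g) = tens f (pd w g) := by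
  funext z
  have h3 := hasFDerivAt_tens hf hg z
  simp only [pd, h3.fderiv, tens]
  simp [mul_comm]

end Ops
section DopLemmas
variable {n : ℕ}

lemma Dop_contDiff {H : Phase n × Phase n → ℂ} (hH : ContDiff ℝ (⊤ : ℕ∞) H) :
    ContDiff ℝ (⊤ : ℕ∞) (Dop n H) :=
  ContDiff.sum fun k _ =>
    (pd_contDiff (pd_contDiff hH _) _).sub (pd_contDiff (pd_contDiff hH _) _)

lemma DopIter_contDiff {H : Phase n × Phase n → ℂ} (hH : ContDiff ℝ (⊤ : ℕ∞) H) (r : ℕ) :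
    ContDiff ℝ (⊤ : ℕ∞) ((Dop n)^[r] H) := by
  induction r with
  | zero => exact hH
  | succ r ih => rw [Function.iterate_succ_apply']; exact Dop_contDiff ih

lemma Dop_zero : Dop n (0 : Phase n × Phase n → ℂ) = 0 := by
  funext z; simp [Dop, pd_zero]

lemma DopIter_zero (r : ℕ) : (Dop n)^[r] (0 : Phase n × Phase n → ℂ) = 0 := by
  induction r with
  | zero => rfl
  | succ r ih => rw [Function.iterate_succ_apply', ih, Dop_zero]

lemma Dop_sub {A B : Phase n × Phase n → ℂ} (hA : ContDiff ℝ (⊤ : ℕ∞) A) (hB : ContDiff ℝ (⊤ : ℕ∞) B) :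
    Dop n (A - B) = Dop n A - Dop n B := by
  funext z
  have hA' := hA.differentiable (by simp)
  have hB' := hB.differentiable (by simp)
  simp only [Dop, Pi.sub_apply]
  rw [← Finset.sum_sub_distrib]
  refine Finset.sum_congr rfl fun k _ => ?_
  rw [pd_sub hA' hB', pd_sub hA' hB',
    pd_sub ((pd_contDiff hA _).differentiable (by simp)) ((pd_contDiff hB _).differentiable (by simp)),
    pd_sub ((pd_contDiff hA _).differentiable (by simp)) ((pd_contDiff hB _).differentiable (by simp))]
  simp only [Pi.sub_apply]
  ring

lemma Dop_finset_sum {ι : Type*} (s : Finset ι) (H : ι → Phase n × Phase n → ℂ)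
    (h : ∀ i ∈ s, ContDiff ℝ (⊤ : ℕ∞) (H i)) :
    Dop n (∑ i ∈ s, H i) = ∑ i ∈ s, Dop n (H i) := by
  funext z
  have hd : ∀ i ∈ s, Differentiable ℝ (H i) := fun i hi => (h i hi).differentiable (by simp)
  have key : ∀ u v : Phase n × Phase n,
      pd u (pd v (∑ i ∈ s, H i)) z = ∑ i ∈ s, pd u (pd v (H i)) z := by
    intro u v
    rw [pd_finset_sum s H hd v,
      pd_finset_sum s _ (fun i hi => (pd_contDiff (h i hi) v).differentiable (by simp)) u]
    simp
  simp only [Dop, Finset.sum_apply]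
  refine Eq.trans ?_ Finset.sum_comm
  refine Finset.sum_congr rfl fun k _ => ?_
  rw [key, key, ← Finset.sum_sub_distrib]

lemma DopIter_sub {A B : Phase n × Phase n → ℂ} (hA : ContDiff ℝ (⊤ : ℕ∞) A) (hB : ContDiff ℝ (⊤ : ℕ∞) B)
    (r : ℕ) : (Dop n)^[r] (A - B) = (Dop n)^[r] A - (Dop n)^[r] B := by
  induction r generalizing A B with
  | zero => rfl
  | succ r ih =>
    rw [Function.iterate_succ_apply, Function.iterate_succ_apply, Function.iterate_succ_apply,
      Dop_sub hA hB, ih (Dop_contDiff hA) (Dop_contDiff hB)]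

lemma DopIter_finset_sum {ι : Type*} (s : Finset ι) (H : ι → Phase n × Phase n → ℂ)
    (h : ∀ i ∈ s, ContDiff ℝ (⊤ : ℕ∞) (H i)) (r : ℕ) :
    (Dop n)^[r] (∑ i ∈ s, H i) = ∑ i ∈ s, (Dop n)^[r] (H i) := by
  induction r generalizing H with
  | zero => rfl
  | succ r ih =>
    rw [Function.iterate_succ_apply, Dop_finset_sum s H h,
      ih _ (fun i hi => Dop_contDiff (h i hi))]
    exact Finset.sum_congr rfl fun i _ => by rw [Function.iterate_succ_apply]

lemma tsupport_Dop_subset (H : Phase n × Phase n → ℂ) : tsupport (Dop n H) ⊆ tsupport H := by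
  apply closure_minimal _ (isClosed_tsupport H)
  intro z hz
  obtain ⟨k, -, hk⟩ := Finset.exists_ne_zero_of_sum_ne_zero hz
  rcases sub_ne_zero.mp hk |> fun h => (em (pd (eQ n k, 0) (pd (0, eP n k) H) z ≠ 0)) with h | h
  · exact tsupport_pd_subset _ _ (tsupport_pd_subset _ _ (subset_closure h))
  · have h2 : pd (eP n k, 0) (pd (0, eQ n k) H) z ≠ 0 := by
      intro h0
      apply hk
      rw [h0]
      by_contra h1
      exact h (sub_ne_zero.mp hk ∘ fun hh => absurd hh (by simpa using h1)) |>.elim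
    exact tsupport_pd_subset _ _ (tsupport_pd_subset _ _ (subset_closure h2))

lemma Dop_tens {f g : Phase n → ℂ} (hf : ContDiff ℝ (⊤ : ℕ∞) f) (hg : ContDiff ℝ (⊤ : ℕ∞) g) :
    Dop n (tens f g) = (∑ k : Fin n, tens (pd (eQ n k) f) (pd (eP n k) g))
      - (∑ k : Fin n, tens (pd (eP n k) f) (pd (eQ n k) g)) := by
  funext z
  simp only [Dop, Pi.sub_apply, Finset.sum_apply]
  rw [← Finset.sum_sub_distrib]
  refine Finset.sum_congr rfl fun k _ => ?_
  rw [pd_tens_right hf hg (eP n k), pd_tens_left hf (pd_contDiff hg _) (eQ n k),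
      pd_tens_right hf hg (eQ n k), pd_tens_left hf (pd_contDiff hg _) (eP n k)]

end DopLemmas
section Res
variable {n : ℕ}

lemma tsupport_DopIter_subset (H : Phase n × Phase n → ℂ) (r : ℕ) :
    tsupport ((Dop n)^[r] H) ⊆ tsupport H := by
  induction r with
  | zero => exact subset_rfl
  | succ r ih =>
    rw [Function.iterate_succ_apply']
    exact (tsupport_Dop_subset _).trans ih

lemma contDiff_resmap : ContDiff ℝ (⊤ : ℕ∞) (fun q : Fin n → ℝ => ((q, 0) : Phase n)) :=
  contDiff_id.prodMk contDiff_const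

lemma res_contDiff {u : Phase n → ℂ} (hu : ContDiff ℝ (⊤ : ℕ∞) u) :
    ContDiff ℝ (⊤ : ℕ∞) (fun q : Fin n → ℝ => u (q, 0)) :=
  hu.comp contDiff_resmap

lemma isClosed_resSet (u : Phase n → ℂ) :
    IsClosed {q : Fin n → ℝ | ((q, 0) : Phase n) ∈ tsupport u} :=
  IsClosed.preimage (contDiff_resmap.continuous) (isClosed_tsupport u)

lemma isCompact_resSet {u : Phase n → ℂ} (hcz : IsCompact (tsupport u ∩ zeroSection n)) :
    IsCompact {q : Fin n → ℝ | ((q, 0) : Phase n) ∈ tsupport u} := by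
  have hS : {q : Fin n → ℝ | ((q, 0) : Phase n) ∈ tsupport u}
      = Prod.fst '' (tsupport u ∩ zeroSection n) := by
    ext q
    constructor
    · intro hq
      exact ⟨(q, 0), ⟨hq, rfl⟩, rfl⟩
    · rintro ⟨x, ⟨hx1, hx2⟩, rfl⟩
      have : x = (x.1, (0 : Fin n → ℝ)) := by
        have : x.2 = 0 := hx2
        exact Prod.ext rfl this
      simpa [← this] using hx1
  rw [hS]
  exact hcz.image continuous_fst

lemma hasCompactSupport_of_res {f : (Fin n → ℝ) → ℂ} {u : Phase n → ℂ}
    (hcz : IsCompact (tsupport u ∩ zeroSection n))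
    (h : ∀ q, f q ≠ 0 → ((q, 0) : Phase n) ∈ tsupport u) : HasCompactSupport f := by
  apply IsCompact.of_isClosed_subset (isCompact_resSet hcz) (isClosed_tsupport f)
  exact closure_minimal h (isClosed_resSet u)

lemma hasCompactSupport_res {u : Phase n → ℂ}
    (hcz : IsCompact (tsupport u ∩ zeroSection n)) :
    HasCompactSupport (fun q : Fin n → ℝ => u (q, 0)) :=
  hasCompactSupport_of_res hcz (fun q hq => subset_closure hq)

lemma HasCompactSupport.pd' {U : (Fin n → ℝ) → ℂ} (h : HasCompactSupport U) (v : Fin n → ℝ) :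
    HasCompactSupport (pd v U) :=
  IsCompact.of_isClosed_subset h (isClosed_tsupport _) (tsupport_pd_subset _ _)

lemma integrable_res_mul {u w : Phase n → ℂ} (hu : ContDiff ℝ (⊤ : ℕ∞) u) (hw : ContDiff ℝ (⊤ : ℕ∞) w)
    (hcz : IsCompact (tsupport u ∩ zeroSection n)) :
    MeasureTheory.Integrable (fun q : Fin n → ℝ => u (q, 0) * w (q, 0)) := by
  have hc : Continuous (fun q : Fin n → ℝ => u (q, 0) * w (q, 0)) :=
    ((res_contDiff hu).continuous).mul ((res_contDiff hw).continuous)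
  apply hc.integrable_of_hasCompactSupport
  exact (hasCompactSupport_res hcz).mul_right

lemma integrable_DopIter_diag {f g : Phase n → ℂ} (hf : ContDiff ℝ (⊤ : ℕ∞) f) (hg : ContDiff ℝ (⊤ : ℕ∞) g)
    (hcz : IsCompact (tsupport f ∩ zeroSection n)) (r : ℕ) :
    MeasureTheory.Integrable
      (fun q : Fin n → ℝ => (Dop n)^[r] (tens f g) (((q, 0) : Phase n), ((q, 0) : Phase n))) := by
  have hc : Continuous
      (fun q : Fin n → ℝ => (Dop n)^[r] (tens f g) (((q, 0) : Phase n), ((q, 0) : Phase n))) := by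
    have h1 : Continuous (fun q : Fin n → ℝ => (((q, 0) : Phase n), ((q, 0) : Phase n))) :=
      (contDiff_resmap.continuous).prodMk (contDiff_resmap.continuous)
    exact ((DopIter_contDiff (tens_contDiff hf hg) r).continuous).comp h1
  apply hc.integrable_of_hasCompactSupport
  apply hasCompactSupport_of_res hcz
  intro q hq
  have h2 : (((q, 0) : Phase n), ((q, 0) : Phase n)) ∈ tsupport (tens f g) :=
    tsupport_DopIter_subset _ r (subset_closure hq)
  have h3 : tsupport (tens f g) ⊆ {z : Phase n × Phase n | z.1 ∈ tsupport f} := by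
    apply closure_minimal _ (IsClosed.preimage continuous_fst (isClosed_tsupport f))
    intro z hz
    have : f z.1 ≠ 0 := fun h0 => hz (by simp [tens, h0])
    exact subset_closure this
  exact h3 h2

lemma res_pdQ {u : Phase n → ℂ} (hu : ContDiff ℝ (⊤ : ℕ∞) u) (k : Fin n) :
    (fun q : Fin n → ℝ => pd (eQ n k) u (q, 0))
      = pd (Pi.single k 1) (fun q : Fin n → ℝ => u (q, 0)) := by
  funext q
  have hin : HasFDerivAt (fun q : Fin n → ℝ => ((q, 0) : Phase n))
      (ContinuousLinearMap.inl ℝ (Fin n → ℝ) (Fin n → ℝ)) q := by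
    have := (ContinuousLinearMap.inl ℝ (Fin n → ℝ) (Fin n → ℝ)).hasFDerivAt (x := q)
    exact this
  have h1 : HasFDerivAt (fun q : Fin n → ℝ => u (q, 0))
      ((fderiv ℝ u ((q, 0) : Phase n)).comp (ContinuousLinearMap.inl ℝ (Fin n → ℝ) (Fin n → ℝ)))
      q := (((hu.differentiable (by simp)) ((q, 0) : Phase n)).hasFDerivAt).comp q hin
  rw [pd, pd, h1.fderiv]
  simp [eQ]

lemma ibp {u w : Phase n → ℂ} (hu : ContDiff ℝ (⊤ : ℕ∞) u) (hw : ContDiff ℝ (⊤ : ℕ∞) w)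
    (hcz : IsCompact (tsupport u ∩ zeroSection n)) (k : Fin n) :
    ∫ q : Fin n → ℝ, pd (eQ n k) u (q, 0) * w (q, 0)
      = - ∫ q : Fin n → ℝ, u (q, 0) * pd (eQ n k) w (q, 0) := by
  have hU : ContDiff ℝ (⊤ : ℕ∞) (fun q : Fin n → ℝ => u (q, 0)) := res_contDiff hu
  have hW : ContDiff ℝ (⊤ : ℕ∞) (fun q : Fin n → ℝ => w (q, 0)) := res_contDiff hw
  have hUc : HasCompactSupport (fun q : Fin n → ℝ => u (q, 0)) := hasCompactSupport_res hcz
  have e1 : ∀ q : Fin n → ℝ, pd (eQ n k) u (q, 0)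
      = fderiv ℝ (fun q : Fin n → ℝ => u (q, 0)) q (Pi.single k 1) := fun q =>
    congrFun (res_pdQ hu k) q
  have e2 : ∀ q : Fin n → ℝ, pd (eQ n k) w (q, 0)
      = fderiv ℝ (fun q : Fin n → ℝ => w (q, 0)) q (Pi.single k 1) := fun q =>
    congrFun (res_pdQ hw k) q
  simp only [e1, e2]
  have h1 : MeasureTheory.Integrable
      (fun q => fderiv ℝ (fun q : Fin n → ℝ => u (q, 0)) q (Pi.single k 1) * w (q, 0)) := by
    refine Continuous.integrable_of_hasCompactSupport
      (((pd_contDiff hU (Pi.single k 1)).continuous).mul hW.continuous) ?_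
    exact (hUc.pd' (Pi.single k 1)).mul_right
  have h2 : MeasureTheory.Integrable
      (fun q => u (q, 0) * fderiv ℝ (fun q : Fin n → ℝ => w (q, 0)) q (Pi.single k 1)) := by
    refine Continuous.integrable_of_hasCompactSupport
      ((hU.continuous).mul ((pd_contDiff hW (Pi.single k 1)).continuous)) ?_
    exact hUc.mul_right
  have h3 : MeasureTheory.Integrable (fun q : Fin n → ℝ => u (q, 0) * w (q, 0)) := by
    refine Continuous.integrable_of_hasCompactSupport ((hU.continuous).mul hW.continuous) ?_
    exact hUc.mul_right
  have h := integral_mul_fderiv_eq_neg_fderiv_mul_of_integrable h1 h2 h3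
    (fun x _ => hU.differentiable (by simp) x) (fun x _ => hW.differentiable (by simp) x) (v := Pi.single k 1)
  rw [h, neg_neg]

end Res
section Key
variable {n : ℕ}

noncomputable def pairI (n : ℕ) (u w : Phase n → ℂ) : ℂ :=
  ∫ q : Fin n → ℝ, u (q, 0) * w (q, 0)

lemma isClosed_zeroSection : IsClosed (zeroSection n) :=
  isClosed_singleton.preimage continuous_snd

lemma cz_mono {f h : Phase n → ℂ} (hsub : tsupport h ⊆ tsupport f)
    (hcz : IsCompact (tsupport f ∩ zeroSection n)) :
    IsCompact (tsupport h ∩ zeroSection n) :=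
  IsCompact.of_isClosed_subset hcz ((isClosed_tsupport h).inter isClosed_zeroSection)
    (Set.inter_subset_inter_left _ hsub)

lemma DeltaOp_pd_comm {f : Phase n → ℂ} (hf : ContDiff ℝ (⊤ : ℕ∞) f) (v : Phase n) :
    DeltaOp n (pd v f) = pd v (DeltaOp n f) := by
  have h1 : ∀ k : Fin n, pd (eQ n k) (pd (eP n k) (pd v f))
      = pd v (pd (eQ n k) (pd (eP n k) f)) := by
    intro k
    rw [pd_comm hf (eP n k) v, pd_comm (pd_contDiff hf (eP n k)) (eQ n k) v]
  funext x
  have h2 : DeltaOp n f = ∑ k : Fin n, pd (eQ n k) (pd (eP n k) f) := by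
    funext y; simp [DeltaOp]
  rw [h2, pd_finset_sum _ _ (fun k _ =>
    (pd_contDiff (pd_contDiff hf (eP n k)) (eQ n k)).differentiable (by simp)) v]
  simp only [DeltaOp, Finset.sum_apply]
  exact Finset.sum_congr rfl fun k _ => by rw [h1 k]

lemma DeltaIter_pd_comm {f : Phase n → ℂ} (hf : ContDiff ℝ (⊤ : ℕ∞) f) (v : Phase n) (s : ℕ) :
    (DeltaOp n)^[s] (pd v f) = pd v ((DeltaOp n)^[s] f) := by
  induction s with
  | zero => rfl
  | succ s ih =>
    rw [Function.iterate_succ_apply', Function.iterate_succ_apply', ih,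
      DeltaOp_pd_comm (DeltaIter_contDiff hf s)]

lemma ibp' {u w : Phase n → ℂ} (hu : ContDiff ℝ (⊤ : ℕ∞) u) (hw : ContDiff ℝ (⊤ : ℕ∞) w)
    (hcz : IsCompact (tsupport u ∩ zeroSection n)) (k : Fin n) :
    ∫ q : Fin n → ℝ, u (q, 0) * pd (eQ n k) w (q, 0)
      = - ∫ q : Fin n → ℝ, pd (eQ n k) u (q, 0) * w (q, 0) := by
  rw [ibp hu hw hcz k, neg_neg]

lemma stepA {f g : Phase n → ℂ} (hf : ContDiff ℝ (⊤ : ℕ∞) f) (hg : ContDiff ℝ (⊤ : ℕ∞) g)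
    (hczf : IsCompact (tsupport f ∩ zeroSection n)) (s t : ℕ) :
    ∑ k : Fin n, pairI n ((DeltaOp n)^[s] (pd (eQ n k) f)) ((DeltaOp n)^[t] (pd (eP n k) g))
      = - pairI n ((DeltaOp n)^[s] f) ((DeltaOp n)^[t + 1] g) := by
  have hu : ContDiff ℝ (⊤ : ℕ∞) ((DeltaOp n)^[s] f) := DeltaIter_contDiff hf s
  have hw : ContDiff ℝ (⊤ : ℕ∞) ((DeltaOp n)^[t] g) := DeltaIter_contDiff hg t
  have hczu : IsCompact (tsupport ((DeltaOp n)^[s] f) ∩ zeroSection n) :=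
    cz_mono (tsupport_DeltaIter_subset f s) hczf
  have h1 : ∀ k : Fin n,
      pairI n ((DeltaOp n)^[s] (pd (eQ n k) f)) ((DeltaOp n)^[t] (pd (eP n k) g))
        = - ∫ q : Fin n → ℝ, (DeltaOp n)^[s] f (q, 0)
            * pd (eQ n k) (pd (eP n k) ((DeltaOp n)^[t] g)) (q, 0) := by
    intro k
    rw [pairI, DeltaIter_pd_comm hf (eQ n k) s, DeltaIter_pd_comm hg (eP n k) t]
    exact ibp hu (pd_contDiff hw (eP n k)) hczu k
  rw [Finset.sum_congr rfl fun k _ => h1 k, Finset.sum_neg_distrib]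
  congr 1
  rw [← MeasureTheory.integral_finset_sum _ (fun k _ =>
    integrable_res_mul hu (pd_contDiff (pd_contDiff hw (eP n k)) (eQ n k)) hczu)]
  rw [pairI, Function.iterate_succ_apply']
  congr 1
  funext q
  rw [← Finset.mul_sum]
  rfl

lemma stepB {f g : Phase n → ℂ} (hf : ContDiff ℝ (⊤ : ℕ∞) f) (hg : ContDiff ℝ (⊤ : ℕ∞) g)
    (hczf : IsCompact (tsupport f ∩ zeroSection n)) (s t : ℕ) :
    ∑ k : Fin n, pairI n ((DeltaOp n)^[s] (pd (eP n k) f)) ((DeltaOp n)^[t] (pd (eQ n k) g))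
      = - pairI n ((DeltaOp n)^[s + 1] f) ((DeltaOp n)^[t] g) := by
  have hu : ContDiff ℝ (⊤ : ℕ∞) ((DeltaOp n)^[s] f) := DeltaIter_contDiff hf s
  have hw : ContDiff ℝ (⊤ : ℕ∞) ((DeltaOp n)^[t] g) := DeltaIter_contDiff hg t
  have hczu : ∀ k : Fin n,
      IsCompact (tsupport (pd (eP n k) ((DeltaOp n)^[s] f)) ∩ zeroSection n) := fun k =>
    cz_mono ((tsupport_pd_subset _ _).trans (tsupport_DeltaIter_subset f s)) hczf
  have h1 : ∀ k : Fin n,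
      pairI n ((DeltaOp n)^[s] (pd (eP n k) f)) ((DeltaOp n)^[t] (pd (eQ n k) g))
        = - ∫ q : Fin n → ℝ, pd (eQ n k) (pd (eP n k) ((DeltaOp n)^[s] f)) (q, 0)
            * (DeltaOp n)^[t] g (q, 0) := by
    intro k
    rw [pairI, DeltaIter_pd_comm hf (eP n k) s, DeltaIter_pd_comm hg (eQ n k) t]
    exact ibp' (pd_contDiff hu (eP n k)) hw (hczu k) k
  rw [Finset.sum_congr rfl fun k _ => h1 k, Finset.sum_neg_distrib]
  congr 1
  rw [← MeasureTheory.integral_finset_sum _ (fun k _ =>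
    integrable_res_mul (pd_contDiff (pd_contDiff hu (eP n k)) (eQ n k)) hw
      (cz_mono ((tsupport_pd_subset _ _).trans
        ((tsupport_pd_subset _ _).trans (tsupport_DeltaIter_subset f s))) hczf))]
  rw [pairI, Function.iterate_succ_apply']
  congr 1
  funext q
  rw [← Finset.sum_mul]
  rfl

lemma pascal (r : ℕ) (J : ℕ → ℂ) :
    ∑ s ∈ Finset.range (r + 1), ((r.choose s : ℂ) * (-1) ^ (r + s)) * (J (s + 1) - J s)
      = ∑ s ∈ Finset.range (r + 2), (((r + 1).choose s : ℂ) * (-1) ^ (r + 1 + s)) * J s := by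
  have hψ : ∀ s, -(((r.choose (s + 1) : ℂ)) * (-1) ^ (r + (s + 1))) * J (s + 1)
      = ((r.choose (s + 1) : ℂ) * (-1) ^ (r + s)) * J (s + 1) := by
    intro s
    rw [show r + (s + 1) = (r + s) + 1 by ring, pow_succ]
    ring
  have claim2 : ∑ s ∈ Finset.range (r + 1),
        ((r.choose (s + 1) : ℂ) * (-1) ^ (r + s)) * J (s + 1)
        + (((r + 1).choose 0 : ℂ) * (-1) ^ (r + 1 + 0)) * J 0
      = - ∑ s ∈ Finset.range (r + 1), ((r.choose s : ℂ) * (-1) ^ (r + s)) * J s := by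
    have h2 : ∑ s ∈ Finset.range (r + 2),
          (-(((r.choose s : ℂ)) * (-1) ^ (r + s))) * J s
        = ∑ s ∈ Finset.range (r + 1),
          ((r.choose (s + 1) : ℂ) * (-1) ^ (r + s)) * J (s + 1)
          + (((r + 1).choose 0 : ℂ) * (-1) ^ (r + 1 + 0)) * J 0 := by
      rw [Finset.sum_range_succ' _ (r + 1)]
      congr 1
      · exact Finset.sum_congr rfl fun s _ => hψ s
      · norm_num [pow_succ]
    rw [← h2, Finset.sum_range_succ]
    simp [Nat.choose_succ_self, Finset.sum_neg_distrib]
  rw [Finset.sum_range_succ' _ (r + 1)]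
  have e1 : ∀ s, (((r + 1).choose (s + 1) : ℂ) * (-1) ^ (r + 1 + (s + 1))) * J (s + 1)
      = ((r.choose s : ℂ) * (-1) ^ (r + s)) * J (s + 1)
        + ((r.choose (s + 1) : ℂ) * (-1) ^ (r + s)) * J (s + 1) := by
    intro s
    rw [Nat.choose_succ_succ, show r + 1 + (s + 1) = (r + s) + 2 by ring, pow_add]
    push_cast
    ring
  rw [Finset.sum_congr rfl fun s _ => e1 s, Finset.sum_add_distrib, add_assoc, claim2]
  simp only [mul_sub]
  rw [Finset.sum_sub_distrib]
  ring

end Key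
section KeyMain
variable {n : ℕ}

lemma contDiff_fun_sum {ι : Type*} (s : Finset ι) (H : ι → Phase n × Phase n → ℂ)
    (h : ∀ i ∈ s, ContDiff ℝ (⊤ : ℕ∞) (H i)) : ContDiff ℝ (⊤ : ℕ∞) (∑ i ∈ s, H i) := by
  have e : (∑ i ∈ s, H i) = fun z => ∑ i ∈ s, H i z := by funext z; simp
  rw [e]; exact ContDiff.sum h

lemma key (n : ℕ) (r : ℕ) : ∀ f g : Phase n → ℂ, ContDiff ℝ (⊤ : ℕ∞) f → ContDiff ℝ (⊤ : ℕ∞) g →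
    IsCompact (tsupport f ∩ zeroSection n) → IsCompact (tsupport g ∩ zeroSection n) →
    (∫ q : Fin n → ℝ, (Dop n)^[r] (tens f g) ((q, 0), (q, 0)))
      = ∑ s ∈ Finset.range (r + 1),
          ((r.choose s : ℂ) * (-1) ^ (r + s))
            * pairI n ((DeltaOp n)^[s] f) ((DeltaOp n)^[r - s] g) := by
  induction r with
  | zero =>
    intro f g hf hg hczf hczg
    simp [pairI, tens]
  | succ r ih =>
    intro f g hf hg hczf hczg
    have hsmA : ∀ k : Fin n, ContDiff ℝ (⊤ : ℕ∞) (tens (pd (eQ n k) f) (pd (eP n k) g)) :=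
      fun k => tens_contDiff (pd_contDiff hf _) (pd_contDiff hg _)
    have hsmB : ∀ k : Fin n, ContDiff ℝ (⊤ : ℕ∞) (tens (pd (eP n k) f) (pd (eQ n k) g)) :=
      fun k => tens_contDiff (pd_contDiff hf _) (pd_contDiff hg _)
    have eq1 : (Dop n)^[r + 1] (tens f g)
        = (∑ k : Fin n, (Dop n)^[r] (tens (pd (eQ n k) f) (pd (eP n k) g)))
          - (∑ k : Fin n, (Dop n)^[r] (tens (pd (eP n k) f) (pd (eQ n k) g))) := by
      rw [Function.iterate_succ_apply, Dop_tens hf hg,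
        DopIter_sub (contDiff_fun_sum _ _ fun k _ => hsmA k)
          (contDiff_fun_sum _ _ fun k _ => hsmB k) r,
        DopIter_finset_sum _ _ (fun k _ => hsmA k) r,
        DopIter_finset_sum _ _ (fun k _ => hsmB k) r]
    have intA : ∀ k : Fin n, MeasureTheory.Integrable (fun q : Fin n → ℝ =>
        (Dop n)^[r] (tens (pd (eQ n k) f) (pd (eP n k) g)) ((q, 0), (q, 0))) := fun k =>
      integrable_DopIter_diag (pd_contDiff hf _) (pd_contDiff hg _)
        (cz_mono (tsupport_pd_subset _ _) hczf) r
    have intB : ∀ k : Fin n, MeasureTheory.Integrable (fun q : Fin n → ℝ =>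
        (Dop n)^[r] (tens (pd (eP n k) f) (pd (eQ n k) g)) ((q, 0), (q, 0))) := fun k =>
      integrable_DopIter_diag (pd_contDiff hf _) (pd_contDiff hg _)
        (cz_mono (tsupport_pd_subset _ _) hczf) r
    have hstep : (∫ q : Fin n → ℝ, (Dop n)^[r + 1] (tens f g) ((q, 0), (q, 0)))
        = (∑ k : Fin n, ∫ q : Fin n → ℝ,
            (Dop n)^[r] (tens (pd (eQ n k) f) (pd (eP n k) g)) ((q, 0), (q, 0)))
          - (∑ k : Fin n, ∫ q : Fin n → ℝ,
            (Dop n)^[r] (tens (pd (eP n k) f) (pd (eQ n k) g)) ((q, 0), (q, 0))) := by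
      rw [show (fun q : Fin n → ℝ => (Dop n)^[r + 1] (tens f g) ((q, 0), (q, 0)))
          = fun q : Fin n → ℝ =>
            (∑ k : Fin n,
              (Dop n)^[r] (tens (pd (eQ n k) f) (pd (eP n k) g)) ((q, 0), (q, 0)))
            - (∑ k : Fin n,
              (Dop n)^[r] (tens (pd (eP n k) f) (pd (eQ n k) g)) ((q, 0), (q, 0)))
        from by funext q; rw [eq1]; simp]
      rw [MeasureTheory.integral_sub
        (MeasureTheory.integrable_finset_sum _ fun k _ => intA k)
        (MeasureTheory.integrable_finset_sum _ fun k _ => intB k),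
        MeasureTheory.integral_finset_sum _ fun k _ => intA k,
        MeasureTheory.integral_finset_sum _ fun k _ => intB k]
    rw [hstep]
    have eA : ∀ k : Fin n, (∫ q : Fin n → ℝ,
        (Dop n)^[r] (tens (pd (eQ n k) f) (pd (eP n k) g)) ((q, 0), (q, 0)))
        = ∑ s ∈ Finset.range (r + 1), ((r.choose s : ℂ) * (-1) ^ (r + s))
            * pairI n ((DeltaOp n)^[s] (pd (eQ n k) f)) ((DeltaOp n)^[r - s] (pd (eP n k) g)) :=
      fun k => ih (pd (eQ n k) f) (pd (eP n k) g) (pd_contDiff hf _) (pd_contDiff hg _)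
        (cz_mono (tsupport_pd_subset _ _) hczf) (cz_mono (tsupport_pd_subset _ _) hczg)
    have eB : ∀ k : Fin n, (∫ q : Fin n → ℝ,
        (Dop n)^[r] (tens (pd (eP n k) f) (pd (eQ n k) g)) ((q, 0), (q, 0)))
        = ∑ s ∈ Finset.range (r + 1), ((r.choose s : ℂ) * (-1) ^ (r + s))
            * pairI n ((DeltaOp n)^[s] (pd (eP n k) f)) ((DeltaOp n)^[r - s] (pd (eQ n k) g)) :=
      fun k => ih (pd (eP n k) f) (pd (eQ n k) g) (pd_contDiff hf _) (pd_contDiff hg _)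
        (cz_mono (tsupport_pd_subset _ _) hczf) (cz_mono (tsupport_pd_subset _ _) hczg)
    have swap1 : ∑ k : Fin n, ∑ s ∈ Finset.range (r + 1), ((r.choose s : ℂ) * (-1) ^ (r + s))
          * pairI n ((DeltaOp n)^[s] (pd (eQ n k) f)) ((DeltaOp n)^[r - s] (pd (eP n k) g))
        = ∑ s ∈ Finset.range (r + 1), ∑ k : Fin n, ((r.choose s : ℂ) * (-1) ^ (r + s))
          * pairI n ((DeltaOp n)^[s] (pd (eQ n k) f)) ((DeltaOp n)^[r - s] (pd (eP n k) g)) :=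
      Finset.sum_comm
    have swap2 : ∑ k : Fin n, ∑ s ∈ Finset.range (r + 1), ((r.choose s : ℂ) * (-1) ^ (r + s))
          * pairI n ((DeltaOp n)^[s] (pd (eP n k) f)) ((DeltaOp n)^[r - s] (pd (eQ n k) g))
        = ∑ s ∈ Finset.range (r + 1), ∑ k : Fin n, ((r.choose s : ℂ) * (-1) ^ (r + s))
          * pairI n ((DeltaOp n)^[s] (pd (eP n k) f)) ((DeltaOp n)^[r - s] (pd (eQ n k) g)) :=
      Finset.sum_comm
    rw [Finset.sum_congr rfl fun k _ => eA k, Finset.sum_congr rfl fun k _ => eB k,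
      swap1, swap2]
    have eS1 : ∀ s ∈ Finset.range (r + 1),
        (∑ k : Fin n, ((r.choose s : ℂ) * (-1) ^ (r + s))
          * pairI n ((DeltaOp n)^[s] (pd (eQ n k) f)) ((DeltaOp n)^[r - s] (pd (eP n k) g)))
        = ((r.choose s : ℂ) * (-1) ^ (r + s))
            * (- pairI n ((DeltaOp n)^[s] f) ((DeltaOp n)^[r + 1 - s] g)) := by
      intro s hs
      have hss : r - s + 1 = r + 1 - s := by
        have := Finset.mem_range.mp hs; omega
      rw [← Finset.mul_sum, stepA hf hg hczf s (r - s), hss]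
    have eS2 : ∀ s ∈ Finset.range (r + 1),
        (∑ k : Fin n, ((r.choose s : ℂ) * (-1) ^ (r + s))
          * pairI n ((DeltaOp n)^[s] (pd (eP n k) f)) ((DeltaOp n)^[r - s] (pd (eQ n k) g)))
        = ((r.choose s : ℂ) * (-1) ^ (r + s))
            * (- pairI n ((DeltaOp n)^[s + 1] f) ((DeltaOp n)^[r + 1 - (s + 1)] g)) := by
      intro s hs
      have hss : r - s = r + 1 - (s + 1) := by omega
      rw [← Finset.mul_sum, stepB hf hg hczf s (r - s), hss]
    have hp : ∑ s ∈ Finset.range (r + 1),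
        ((r.choose s : ℂ) * (-1) ^ (r + s)) *
          (pairI n ((DeltaOp n)^[s + 1] f) ((DeltaOp n)^[r + 1 - (s + 1)] g)
            - pairI n ((DeltaOp n)^[s] f) ((DeltaOp n)^[r + 1 - s] g))
        = ∑ s ∈ Finset.range (r + 2), (((r + 1).choose s : ℂ) * (-1) ^ (r + 1 + s)) *
            pairI n ((DeltaOp n)^[s] f) ((DeltaOp n)^[r + 1 - s] g) :=
      pascal r (fun i => pairI n ((DeltaOp n)^[i] f) ((DeltaOp n)^[r + 1 - i] g))
    rw [Finset.sum_congr rfl eS1, Finset.sum_congr rfl eS2, ← hp, ← Finset.sum_sub_distrib]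
    exact Finset.sum_congr rfl fun s hs => by ring

end KeyMain
section Assembly
variable {n : ℕ}

noncomputable def kap (s : ℕ) : ℂ := ((s.factorial : ℂ))⁻¹ * (Complex.I / 2) ^ s
noncomputable def kap' (t : ℕ) : ℂ := ((t.factorial : ℂ))⁻¹ * (-(Complex.I / 2)) ^ t

lemma conj_kap' (t : ℕ) : (starRingEnd ℂ) (kap' t) = kap t := by
  simp only [kap, kap', map_mul, map_inv₀, map_natCast, map_pow, map_neg, map_div₀,
    Complex.conj_I, map_ofNat, neg_neg, neg_div]

lemma pairI_zero_left (w : Phase n → ℂ) : pairI n 0 w = 0 := by simp [pairI]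
lemma pairI_zero_right (u : Phase n → ℂ) : pairI n u 0 = 0 := by simp [pairI]

lemma tsupport_conj (f : Phase n → ℂ) :
    tsupport (fun x => (starRingEnd ℂ) (f x)) = tsupport f := by
  have h : Function.support (fun x => (starRingEnd ℂ) (f x)) = Function.support f := by
    ext x; simp [Function.mem_support]
  simp only [tsupport, h]

lemma Mop_zero_left (r : ℕ) (g : Phase n → ℂ) : Mop n r 0 g = 0 := by
  funext x
  rw [Mop_eq_tens, tens_zero_left, DopIter_zero]
  rfl

lemma Mop_zero_right (r : ℕ) (f : Phase n → ℂ) : Mop n r f 0 = 0 := by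
  funext x
  rw [Mop_eq_tens, tens_zero_right, DopIter_zero]
  rfl

lemma coefid (r s : ℕ) (hs : s ≤ r) :
    ((r.factorial : ℂ))⁻¹ * (Complex.I / 2) ^ r * ((r.choose s : ℂ) * (-1) ^ (r + s))
      = kap s * kap' (r - s) := by
  have h1 : (-1 : ℂ) ^ (r + s) = (-1) ^ (r - s) := by
    rw [show r + s = (r - s) + 2 * s by omega, pow_add, pow_mul]
    norm_num
  have h2 : (-(Complex.I / 2)) ^ (r - s) = (-1) ^ (r - s) * (Complex.I / 2) ^ (r - s) := by
    rw [neg_pow]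
  have h3 : (Complex.I / 2) ^ r = (Complex.I / 2) ^ s * (Complex.I / 2) ^ (r - s) := by
    rw [← pow_add]
    congr 1
    omega
  have h4 : (r.choose s : ℂ) = (r.factorial : ℂ) / ((s.factorial : ℂ) * ((r - s).factorial : ℂ)) := by
    rw [Nat.cast_choose ℂ hs]
  have hr0 : (r.factorial : ℂ) ≠ 0 := Nat.cast_ne_zero.mpr (Nat.factorial_ne_zero r)
  have hs0 : (s.factorial : ℂ) ≠ 0 := Nat.cast_ne_zero.mpr (Nat.factorial_ne_zero s)
  have ht0 : ((r - s).factorial : ℂ) ≠ 0 := Nat.cast_ne_zero.mpr (Nat.factorial_ne_zero _)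
  rw [kap, kap', h1, h2, h3, h4]
  field_simp

lemma tri (R : ℕ) (φ : ℕ → ℕ → ℂ) (h : ∀ s t, R ≤ s + t → φ s t = 0) :
    ∑ r ∈ Finset.range R, ∑ s ∈ Finset.range (r + 1), φ s (r - s)
      = ∑ s ∈ Finset.range R, ∑ t ∈ Finset.range R, φ s t := by
  simp only [Finset.range_eq_Ico]
  rw [show (∑ r ∈ Finset.Ico 0 R, ∑ s ∈ Finset.Ico 0 (r + 1), φ s (r - s))
      = ∑ s ∈ Finset.Ico 0 R, ∑ r ∈ Finset.Ico s R, φ s (r - s) from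
    (Finset.sum_Ico_Ico_comm 0 R (fun s r => φ s (r - s))).symm]
  refine Finset.sum_congr rfl fun s hs => ?_
  rw [Finset.sum_Ico_eq_sum_range]
  have e1 : ∀ t, φ s (s + t - s) = φ s t := fun t => by rw [Nat.add_sub_cancel_left]
  rw [Finset.sum_congr rfl fun t _ => e1 t]
  rw [← Finset.range_eq_Ico]
  refine Finset.sum_subset (Finset.range_subset_range.mpr (by omega)) fun t ht hnt => ?_
  apply h
  simp only [Finset.mem_range] at ht hnt
  omega

end Assembly
section GfunSec
variable {n : ℕ}

noncomputable def Gfun (n : ℕ) (F : ℤ → Phase n → ℂ) (N b : ℤ) : (Fin n → ℝ) → ℂ :=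
  fun q => ∑ t ∈ Finset.range ((b - N).toNat + 1),
    kap' t * ((DeltaOp n)^[t] (F (b - t))) (q, 0)

variable {F : ℤ → Phase n → ℂ} {N : ℤ}

lemma conjS_smooth (hsm : ∀ m, ContDiff ℝ (⊤ : ℕ∞) (F m)) (a : ℤ) :
    ContDiff ℝ (⊤ : ℕ∞) (conjSeries n F a) := conj_contDiff (hsm a)

lemma conjS_cz (hcs : ∀ m, IsCompact (tsupport (F m) ∩ zeroSection n)) (a : ℤ) :
    IsCompact (tsupport (conjSeries n F a) ∩ zeroSection n) := by
  have e : tsupport (conjSeries n F a) = tsupport (F a) := tsupport_conj (F a)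
  rw [e]; exact hcs a

lemma conjS_zero {a : ℤ} (h : F a = 0) : conjSeries n F a = 0 := by
  funext x; simp [conjSeries, h]

lemma Gfun_vanish (hN : ∀ m : ℤ, m < N → F m = 0) {b : ℤ} (hb : b < N) :
    Gfun n F N b = 0 := by
  funext q
  apply Finset.sum_eq_zero
  intro t _
  rw [hN (b - t) (by omega), DeltaIter_zero]
  simp

lemma Gfun_cont (hsm : ∀ m, ContDiff ℝ (⊤ : ℕ∞) (F m)) (b : ℤ) : Continuous (Gfun n F N b) := by
  apply continuous_finset_sum
  intro t _
  exact continuous_const.mul ((res_contDiff (DeltaIter_contDiff (hsm _) t)).continuous)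

lemma Gfun_hcs (hcs : ∀ m, IsCompact (tsupport (F m) ∩ zeroSection n)) (b : ℤ) :
    HasCompactSupport (Gfun n F N b) := by
  set T := (b - N).toNat + 1 with hT
  have hsub : Function.support (Gfun n F N b) ⊆
      ⋃ t ∈ Finset.range T, {q : Fin n → ℝ | ((q, 0) : Phase n) ∈ tsupport (F (b - t))} := by
    intro q hq
    rw [Function.mem_support] at hq
    by_contra hc
    apply hq
    apply Finset.sum_eq_zero
    intro t ht
    have h0 : ((q, 0) : Phase n) ∉ tsupport (F (b - t)) := by
      intro hmem
      exact hc (Set.mem_biUnion ht hmem)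
    have h1 : (DeltaOp n)^[t] (F (b - t)) (q, 0) = 0 := by
      by_contra hne
      exact h0 (tsupport_DeltaIter_subset (F (b - t)) t (subset_closure hne))
    rw [h1, mul_zero]
  have hcl : IsClosed (⋃ t ∈ Finset.range T,
      {q : Fin n → ℝ | ((q, 0) : Phase n) ∈ tsupport (F (b - t))}) :=
    Set.Finite.isClosed_biUnion (Finset.finite_toSet _) (fun t _ => isClosed_resSet _)
  have hcp : IsCompact (⋃ t ∈ Finset.range T,
      {q : Fin n → ℝ | ((q, 0) : Phase n) ∈ tsupport (F (b - t))}) :=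
    Set.Finite.isCompact_biUnion (Finset.finite_toSet _) (fun t _ => isCompact_resSet (hcs _))
  exact IsCompact.of_isClosed_subset hcp (isClosed_tsupport _) (closure_minimal hsub hcl)

lemma Gfun_conj (hsm : ∀ m, ContDiff ℝ (⊤ : ℕ∞) (F m)) (a : ℤ) (q : Fin n → ℝ) :
    (starRingEnd ℂ) (Gfun n F N a q)
      = ∑ s ∈ Finset.range ((a - N).toNat + 1),
          kap s * ((DeltaOp n)^[s] (conjSeries n F (a - s))) (q, 0) := by
  rw [Gfun, map_sum]
  refine Finset.sum_congr rfl fun s _ => ?_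
  rw [map_mul, conj_kap']
  congr 1
  have e := DeltaIter_conj (hsm (a - s)) s
  have e2 : (DeltaOp n)^[s] (conjSeries n F (a - s)) (q, 0)
      = (starRingEnd ℂ) ((DeltaOp n)^[s] (F (a - s)) (q, 0)) := by
    have e3 : conjSeries n F (a - s) = fun y => (starRingEnd ℂ) (F (a - s) y) := rfl
    rw [e3, e]
  rw [e2]

end GfunSec
section MainChain
variable {n : ℕ} {F : ℤ → Phase n → ℂ} {N : ℤ}

lemma vanish1 (hN : ∀ m : ℤ, m < N → F m = 0) {x : ℤ} (hx : x < N) (s : ℕ)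
    (w : Phase n → ℂ) : pairI n ((DeltaOp n)^[s] (conjSeries n F x)) w = 0 := by
  rw [conjS_zero (hN x hx), DeltaIter_zero, pairI_zero_left]

lemma vanish2 (hN : ∀ m : ℤ, m < N → F m = 0) {x : ℤ} (hx : x < N) (t : ℕ)
    (u : Phase n → ℂ) : pairI n u ((DeltaOp n)^[t] (F x)) = 0 := by
  rw [hN x hx, DeltaIter_zero, pairI_zero_right]

lemma weyl_finite (hsm : ∀ m, ContDiff ℝ (⊤ : ℕ∞) (F m)) (hN : ∀ m : ℤ, m < N → F m = 0)
    (m : ℤ) :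
    weylStar n (conjSeries n F) F m
      = ∑ r ∈ Finset.range ((m - 2 * N).toNat + 1), ∑ a ∈ Finset.Icc N (m - N),
          (((r.factorial : ℂ))⁻¹ * (Complex.I / 2) ^ r) •
            Mop n r (conjSeries n F a) (F (m - r - a)) := by
  have hinner : ∀ r : ℕ, (∑ᶠ (a : ℤ), (((r.factorial : ℂ))⁻¹ * (Complex.I / 2) ^ r) •
      Mop n r (conjSeries n F a) (F (m - r - a)))
      = ∑ a ∈ Finset.Icc N (m - N), (((r.factorial : ℂ))⁻¹ * (Complex.I / 2) ^ r) •
          Mop n r (conjSeries n F a) (F (m - r - a)) := by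
    intro r
    apply finsum_eq_sum_of_support_subset
    intro a ha
    simp only [Function.mem_support] at ha
    rw [Finset.coe_Icc, Set.mem_Icc]
    constructor
    · by_contra h
      push_neg at h
      exact ha (by rw [conjS_zero (hN a h), Mop_zero_left, smul_zero])
    · by_contra h
      push_neg at h
      have hx : m - r - a < N := by omega
      exact ha (by rw [hN _ hx, Mop_zero_right, smul_zero])
  show (∑ᶠ (r : ℕ), ∑ᶠ (a : ℤ), (((r.factorial : ℂ))⁻¹ * (Complex.I / 2) ^ r) •
      Mop n r (conjSeries n F a) (F (m - r - a))) = _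
  rw [finsum_congr hinner]
  apply finsum_eq_sum_of_support_subset
  intro r hr
  simp only [Function.mem_support] at hr
  rw [Finset.coe_range, Set.mem_Iio]
  by_contra hR
  push_neg at hR
  apply hr
  apply Finset.sum_eq_zero
  intro a ha
  rw [Finset.mem_Icc] at ha
  have h1 : (m - 2 * N : ℤ) ≤ ((m - 2 * N).toNat : ℤ) := Int.self_le_toNat _
  have h3 : (((m - 2 * N).toNat + 1 : ℕ) : ℤ) ≤ (r : ℤ) := by exact_mod_cast hR
  push_cast at h3
  have hx : m - r - a < N := by omega
  rw [hN _ hx, Mop_zero_right, smul_zero]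

lemma shift_eq (hN : ∀ m : ℤ, m < N → F m = 0) (s t : ℕ) (m : ℤ) :
    (∑ a ∈ Finset.Icc N (m - N),
        pairI n ((DeltaOp n)^[s] (conjSeries n F a)) ((DeltaOp n)^[t] (F (m - s - t - a))))
      = ∑ a ∈ Finset.Icc N (m - N),
          pairI n ((DeltaOp n)^[s] (conjSeries n F (a - s)))
            ((DeltaOp n)^[t] (F (m - a - t))) := by
  have hmap : ∑ a ∈ Finset.Icc (N + (s : ℤ)) (m - N + (s : ℤ)),
      pairI n ((DeltaOp n)^[s] (conjSeries n F (a - s)))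
        ((DeltaOp n)^[t] (F (m - a - t)))
      = ∑ a ∈ Finset.Icc N (m - N),
          pairI n ((DeltaOp n)^[s] (conjSeries n F a)) ((DeltaOp n)^[t] (F (m - s - t - a))) := by
    rw [← Finset.map_add_right_Icc, Finset.sum_map]
    refine Finset.sum_congr rfl fun a _ => ?_
    have e1 : (addRightEmbedding (s : ℤ)) a - s = a := by
      simp [addRightEmbedding]
    have e2 : m - (addRightEmbedding (s : ℤ)) a - t = m - s - t - a := by
      simp [addRightEmbedding]; ring
    rw [e1, e2]
  rw [← hmap]
  have hsub1 : Finset.Icc (N + (s : ℤ)) (m - N + (s : ℤ)) ⊆ Finset.Icc N (m - N + (s : ℤ)) := by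
    apply Finset.Icc_subset_Icc _ le_rfl
    omega
  have hsub2 : Finset.Icc N (m - N) ⊆ Finset.Icc N (m - N + (s : ℤ)) := by
    apply Finset.Icc_subset_Icc le_rfl
    omega
  rw [Finset.sum_subset hsub1 ?_, Finset.sum_subset hsub2 ?_]
  · intro a ha hna
    rw [Finset.mem_Icc] at ha
    rw [Finset.mem_Icc] at hna
    have : m - a - t < N := by omega
    exact vanish2 hN this t _
  · intro a ha hna
    rw [Finset.mem_Icc] at ha
    rw [Finset.mem_Icc] at hna
    have : a - s < N := by omega
    exact vanish1 hN this s _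

end MainChain
section ExpandInt
variable {n : ℕ} {F : ℤ → Phase n → ℂ} {N : ℤ}

lemma expand_int (hsm : ∀ m, ContDiff ℝ (⊤ : ℕ∞) (F m))
    (hcs : ∀ m, IsCompact (tsupport (F m) ∩ zeroSection n)) (a m : ℤ) :
    (∫ q : Fin n → ℝ, (starRingEnd ℂ) (Gfun n F N a q) * Gfun n F N (m - a) q)
      = ∑ s ∈ Finset.range ((a - N).toNat + 1),
          ∑ t ∈ Finset.range ((m - a - N).toNat + 1),
            (kap s * kap' t) * pairI n ((DeltaOp n)^[s] (conjSeries n F (a - s)))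
              ((DeltaOp n)^[t] (F (m - a - t))) := by
  have hint : ∀ (s t : ℕ), MeasureTheory.Integrable (fun q : Fin n → ℝ =>
      ((DeltaOp n)^[s] (conjSeries n F (a - s))) (q, 0)
        * ((DeltaOp n)^[t] (F (m - a - t))) (q, 0)) := fun s t =>
    integrable_res_mul (DeltaIter_contDiff (conjS_smooth hsm _) s)
      (DeltaIter_contDiff (hsm _) t)
      (cz_mono (tsupport_DeltaIter_subset _ s) (conjS_cz hcs _))
  have e : ∀ q : Fin n → ℝ, (starRingEnd ℂ) (Gfun n F N a q) * Gfun n F N (m - a) q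
      = ∑ s ∈ Finset.range ((a - N).toNat + 1),
          ∑ t ∈ Finset.range ((m - a - N).toNat + 1),
            (kap s * kap' t) * (((DeltaOp n)^[s] (conjSeries n F (a - s))) (q, 0)
              * ((DeltaOp n)^[t] (F (m - a - t))) (q, 0)) := by
    intro q
    rw [Gfun_conj hsm a q, Gfun, Finset.sum_mul_sum]
    exact Finset.sum_congr rfl fun s _ => Finset.sum_congr rfl fun t _ => by ring
  simp only [e]
  rw [MeasureTheory.integral_finset_sum _ (fun s _ =>
    MeasureTheory.integrable_finset_sum _ (fun t _ => ((hint s t).const_mul _)))]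
  refine Finset.sum_congr rfl fun s _ => ?_
  rw [MeasureTheory.integral_finset_sum _ (fun t _ => ((hint s t).const_mul _))]
  refine Finset.sum_congr rfl fun t _ => ?_
  rw [MeasureTheory.integral_const_mul]
  rfl

lemma extend_ranges (hN : ∀ m : ℤ, m < N → F m = 0) {a m : ℤ} (ha : a ∈ Finset.Icc N (m - N)) :
    (∑ s ∈ Finset.range ((a - N).toNat + 1),
        ∑ t ∈ Finset.range ((m - a - N).toNat + 1),
          (kap s * kap' t) * pairI n ((DeltaOp n)^[s] (conjSeries n F (a - s)))
            ((DeltaOp n)^[t] (F (m - a - t))))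
      = ∑ s ∈ Finset.range ((m - 2 * N).toNat + 1),
          ∑ t ∈ Finset.range ((m - 2 * N).toNat + 1),
            (kap s * kap' t) * pairI n ((DeltaOp n)^[s] (conjSeries n F (a - s)))
              ((DeltaOp n)^[t] (F (m - a - t))) := by
  rw [Finset.mem_Icc] at ha
  have hb1 : (a - N : ℤ) ≤ ((a - N).toNat : ℤ) := Int.self_le_toNat _
  have hb2 : (m - a - N : ℤ) ≤ ((m - a - N).toNat : ℤ) := Int.self_le_toNat _
  have hR1 : (a - N).toNat + 1 ≤ (m - 2 * N).toNat + 1 := by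
    have := Int.toNat_le_toNat (show (a - N : ℤ) ≤ m - 2 * N by omega)
    omega
  have hR2 : (m - a - N).toNat + 1 ≤ (m - 2 * N).toNat + 1 := by
    have := Int.toNat_le_toNat (show (m - a - N : ℤ) ≤ m - 2 * N by omega)
    omega
  have hinner : ∀ s ∈ Finset.range ((a - N).toNat + 1),
      (∑ t ∈ Finset.range ((m - a - N).toNat + 1),
        (kap s * kap' t) * pairI n ((DeltaOp n)^[s] (conjSeries n F (a - s)))
          ((DeltaOp n)^[t] (F (m - a - t))))
      = ∑ t ∈ Finset.range ((m - 2 * N).toNat + 1),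
          (kap s * kap' t) * pairI n ((DeltaOp n)^[s] (conjSeries n F (a - s)))
            ((DeltaOp n)^[t] (F (m - a - t))) := by
    intro s _
    refine Finset.sum_subset (Finset.range_subset_range.mpr hR2) fun t _ hnt => ?_
    simp only [Finset.mem_range] at hnt
    have hx : m - a - t < N := by omega
    rw [vanish2 hN hx t _, mul_zero]
  rw [Finset.sum_congr rfl hinner]
  refine Finset.sum_subset (Finset.range_subset_range.mpr hR1) fun s _ hns => ?_
  simp only [Finset.mem_range] at hns
  have hx : a - s < N := by omega
  apply Finset.sum_eq_zero
  intro t _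
  rw [vanish1 hN hx s _, mul_zero]

end ExpandInt
section MainEq
variable {n : ℕ} {F : ℤ → Phase n → ℂ} {N : ℤ}

lemma main_eq (hsm : ∀ m, ContDiff ℝ (⊤ : ℕ∞) (F m)) (hN : ∀ m : ℤ, m < N → F m = 0)
    (hcs : ∀ m, IsCompact (tsupport (F m) ∩ zeroSection n)) (m : ℤ) :
    omega0 n (weylStar n (conjSeries n F) F) m
      = ∑ a ∈ Finset.Icc N (m - N), ∫ q : Fin n → ℝ,
          (starRingEnd ℂ) (Gfun n F N a q) * Gfun n F N (m - a) q := by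
  have hint : ∀ (r : ℕ) (a b : ℤ), MeasureTheory.Integrable
      (fun q : Fin n → ℝ => Mop n r (conjSeries n F a) (F b) (q, 0)) :=
    fun r a b => integrable_DopIter_diag (conjS_smooth hsm a) (hsm b) (conjS_cz hcs a) r
  have step1 : omega0 n (weylStar n (conjSeries n F) F) m
      = ∑ r ∈ Finset.range ((m - 2 * N).toNat + 1), ∑ a ∈ Finset.Icc N (m - N),
          (((r.factorial : ℂ))⁻¹ * (Complex.I / 2) ^ r)
            * ∫ q : Fin n → ℝ, Mop n r (conjSeries n F a) (F (m - r - a)) (q, 0) := by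
    rw [show omega0 n (weylStar n (conjSeries n F) F) m
        = ∫ q : Fin n → ℝ, weylStar n (conjSeries n F) F m (q, 0) from rfl,
      weyl_finite hsm hN m]
    simp only [Finset.sum_apply, Pi.smul_apply, smul_eq_mul]
    rw [MeasureTheory.integral_finset_sum _ (fun r _ =>
      MeasureTheory.integrable_finset_sum _ (fun a _ => ((hint r a _).const_mul _)))]
    refine Finset.sum_congr rfl fun r _ => ?_
    rw [MeasureTheory.integral_finset_sum _ (fun a _ => ((hint r a _).const_mul _))]
    refine Finset.sum_congr rfl fun a _ => ?_
    rw [MeasureTheory.integral_const_mul]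
  rw [step1]
  have step2 : ∀ r : ℕ, ∀ a : ℤ,
      (((r.factorial : ℂ))⁻¹ * (Complex.I / 2) ^ r)
          * (∫ q : Fin n → ℝ, Mop n r (conjSeries n F a) (F (m - r - a)) (q, 0))
        = ∑ s ∈ Finset.range (r + 1), (kap s * kap' (r - s))
            * pairI n ((DeltaOp n)^[s] (conjSeries n F a))
                ((DeltaOp n)^[r - s] (F (m - r - a))) := by
    intro r a
    have hk : (∫ q : Fin n → ℝ, Mop n r (conjSeries n F a) (F (m - r - a)) (q, 0))
        = ∑ s ∈ Finset.range (r + 1), ((r.choose s : ℂ) * (-1) ^ (r + s))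
            * pairI n ((DeltaOp n)^[s] (conjSeries n F a))
                ((DeltaOp n)^[r - s] (F (m - r - a))) :=
      key n r (conjSeries n F a) (F (m - r - a)) (conjS_smooth hsm a) (hsm _)
        (conjS_cz hcs a) (hcs _)
    rw [hk, Finset.mul_sum]
    refine Finset.sum_congr rfl fun s hs => ?_
    rw [← mul_assoc, coefid r s (by simpa [Nat.lt_succ_iff] using hs)]
  rw [Finset.sum_congr rfl fun r _ => Finset.sum_congr rfl fun a _ => step2 r a]
  have step3 : ∀ r : ℕ,
      (∑ a ∈ Finset.Icc N (m - N), ∑ s ∈ Finset.range (r + 1), (kap s * kap' (r - s))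
          * pairI n ((DeltaOp n)^[s] (conjSeries n F a))
              ((DeltaOp n)^[r - s] (F (m - r - a))))
        = ∑ s ∈ Finset.range (r + 1), ∑ a ∈ Finset.Icc N (m - N), (kap s * kap' (r - s))
            * pairI n ((DeltaOp n)^[s] (conjSeries n F a))
                ((DeltaOp n)^[r - s] (F (m - r - a))) := fun r => Finset.sum_comm
  rw [Finset.sum_congr rfl fun r _ => step3 r]
  have step4 : ∀ r : ℕ, ∀ s ∈ Finset.range (r + 1),
      (∑ a ∈ Finset.Icc N (m - N), (kap s * kap' (r - s))
          * pairI n ((DeltaOp n)^[s] (conjSeries n F a))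
              ((DeltaOp n)^[r - s] (F (m - r - a))))
        = ∑ a ∈ Finset.Icc N (m - N), (kap s * kap' (r - s))
            * pairI n ((DeltaOp n)^[s] (conjSeries n F (a - s)))
                ((DeltaOp n)^[r - s] (F (m - a - ((r - s : ℕ) : ℤ)))) := by
    intro r s hs
    have hsr : s ≤ r := by simpa [Nat.lt_succ_iff] using hs
    have e1 : ∀ a : ℤ, (m - r - a : ℤ) = m - s - (r - s : ℕ) - a := by
      intro a
      have : ((r : ℤ)) = (s : ℤ) + ((r - s : ℕ) : ℤ) := by
        push_cast [Nat.cast_sub hsr]; ring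
      omega
    rw [Finset.sum_congr rfl fun a _ => by rw [e1 a]]
    rw [← Finset.mul_sum, shift_eq hN s (r - s) m, Finset.mul_sum]
  rw [Finset.sum_congr rfl fun r _ => Finset.sum_congr rfl (step4 r)]
  have hvan : ∀ s t : ℕ, (m - 2 * N).toNat + 1 ≤ s + t →
      (∑ a ∈ Finset.Icc N (m - N), (kap s * kap' t)
          * pairI n ((DeltaOp n)^[s] (conjSeries n F (a - s)))
              ((DeltaOp n)^[t] (F (m - a - t)))) = 0 := by
    intro s t hst
    apply Finset.sum_eq_zero
    intro a ha
    rw [Finset.mem_Icc] at ha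
    have hb : (m - 2 * N : ℤ) ≤ ((m - 2 * N).toNat : ℤ) := Int.self_le_toNat _
    have hst' : (((m - 2 * N).toNat + 1 : ℕ) : ℤ) ≤ (s : ℤ) + t := by exact_mod_cast hst
    push_cast at hst'
    by_cases hc : a - s < N
    · rw [vanish1 hN hc s _, mul_zero]
    · push_neg at hc
      have : m - a - t < N := by omega
      rw [vanish2 hN this t _, mul_zero]
  have htri : (∑ r ∈ Finset.range ((m - 2 * N).toNat + 1),
        ∑ s ∈ Finset.range (r + 1),
          ∑ a ∈ Finset.Icc N (m - N), (kap s * kap' (r - s))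
            * pairI n ((DeltaOp n)^[s] (conjSeries n F (a - s)))
                ((DeltaOp n)^[r - s] (F (m - a - ((r - s : ℕ) : ℤ)))))
      = ∑ s ∈ Finset.range ((m - 2 * N).toNat + 1),
          ∑ t ∈ Finset.range ((m - 2 * N).toNat + 1),
            ∑ a ∈ Finset.Icc N (m - N), (kap s * kap' t)
              * pairI n ((DeltaOp n)^[s] (conjSeries n F (a - s)))
                  ((DeltaOp n)^[t] (F (m - a - t))) :=
    tri ((m - 2 * N).toNat + 1)
      (fun s t => ∑ a ∈ Finset.Icc N (m - N), (kap s * kap' t)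
        * pairI n ((DeltaOp n)^[s] (conjSeries n F (a - s)))
            ((DeltaOp n)^[t] (F (m - a - t)))) hvan
  rw [htri]
  have hsw1 : ∀ s : ℕ,
      (∑ t ∈ Finset.range ((m - 2 * N).toNat + 1),
        ∑ a ∈ Finset.Icc N (m - N), (kap s * kap' t)
          * pairI n ((DeltaOp n)^[s] (conjSeries n F (a - s)))
              ((DeltaOp n)^[t] (F (m - a - t))))
      = ∑ a ∈ Finset.Icc N (m - N),
          ∑ t ∈ Finset.range ((m - 2 * N).toNat + 1), (kap s * kap' t)
            * pairI n ((DeltaOp n)^[s] (conjSeries n F (a - s)))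
                ((DeltaOp n)^[t] (F (m - a - t))) := fun s => Finset.sum_comm
  rw [Finset.sum_congr rfl fun s _ => hsw1 s]
  have hsw2 : (∑ s ∈ Finset.range ((m - 2 * N).toNat + 1),
        ∑ a ∈ Finset.Icc N (m - N),
          ∑ t ∈ Finset.range ((m - 2 * N).toNat + 1), (kap s * kap' t)
            * pairI n ((DeltaOp n)^[s] (conjSeries n F (a - s)))
                ((DeltaOp n)^[t] (F (m - a - t))))
      = ∑ a ∈ Finset.Icc N (m - N),
          ∑ s ∈ Finset.range ((m - 2 * N).toNat + 1),
            ∑ t ∈ Finset.range ((m - 2 * N).toNat + 1), (kap s * kap' t)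
              * pairI n ((DeltaOp n)^[s] (conjSeries n F (a - s)))
                  ((DeltaOp n)^[t] (F (m - a - t))) := Finset.sum_comm
  rw [hsw2]
  refine Finset.sum_congr rfl fun a ha => ?_
  rw [← extend_ranges hN ha, ← expand_int hsm hcs a m]

end MainEq
/-- The functional `ω₀` is positive on `(C^∞(T*ℝ^n)_{ℝ^n}((λ)), ⋆)`: for every
`f ∈ C^∞(T*ℝ^n)_{ℝ^n}((λ))`, the Laurent series `ω₀(f̄ ⋆ f)` has real coefficients
and is `≥ 0` for the order on `ℝ((λ))` in which `x > 0` iff the coefficient of the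
lowest nonvanishing power of `λ` is positive. -/
theorem omega0_positive (n : ℕ) (F : ℤ → Phase n → ℂ) (hF : IsLaurentCS n F) :
    LaurentNonneg (omega0 n (weylStar n (conjSeries n F) F)) := by
  obtain ⟨⟨hsm, N, hN⟩, hcs⟩ := hF
  constructor
  · -- reality of coefficients
    intro m
    rw [main_eq hsm hN hcs m]
    apply Complex.conj_eq_iff_im.mp
    rw [map_sum]
    have e : ∀ a : ℤ, (starRingEnd ℂ)
        (∫ q : Fin n → ℝ, (starRingEnd ℂ) (Gfun n F N a q) * Gfun n F N (m - a) q)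
        = ∫ q : Fin n → ℝ, (starRingEnd ℂ) (Gfun n F N (m - a) q) * Gfun n F N a q := by
      intro a
      rw [← integral_conj]
      congr 1
      funext q
      rw [map_mul]
      simp [mul_comm]
    rw [Finset.sum_congr rfl fun a _ => e a]
    refine Finset.sum_nbij' (fun a => m - a) (fun a => m - a) ?_ ?_ ?_ ?_ ?_
    · intro a ha
      simp only [Finset.mem_Icc] at ha ⊢
      omega
    · intro a ha
      simp only [Finset.mem_Icc] at ha ⊢
      omega
    · intro a _; omega
    · intro a _; omega
    · intro a _
      rw [show m - (m - a) = a by omega]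
  · by_cases hG : ∀ b : ℤ, Gfun n F N b = 0
    · left
      refine funext fun m => ?_
      show omega0 n (weylStar n (conjSeries n F) F) m = (0 : ℂ)
      rw [main_eq hsm hN hcs m]
      apply Finset.sum_eq_zero
      intro a _
      rw [hG a]
      simp
    · right
      push_neg at hG
      obtain ⟨b₀, hb₀, hmin⟩ := Int.exists_least_of_bdd
        (P := fun b : ℤ => Gfun n F N b ≠ 0)
        ⟨N, fun z hz => by
          by_contra h
          push_neg at h
          exact hz (Gfun_vanish hN (by omega))⟩ hG
      have hvanb : ∀ b : ℤ, b < b₀ → Gfun n F N b = 0 := by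
        intro b hb
        by_contra h
        exact absurd (hmin b h) (by omega)
      have hNb : N ≤ b₀ := by
        by_contra h
        push_neg at h
        exact hb₀ (Gfun_vanish hN h)
      refine ⟨2 * b₀, ?_, ?_⟩
      · intro m hm
        rw [main_eq hsm hN hcs m]
        apply Finset.sum_eq_zero
        intro a _
        by_cases hca : a < b₀
        · rw [hvanb a hca]; simp
        · push_neg at hca
          have h2 : m - a < b₀ := by omega
          rw [hvanb _ h2]; simp
      · rw [main_eq hsm hN hcs (2 * b₀)]
        have hsingle : (∑ a ∈ Finset.Icc N (2 * b₀ - N), ∫ q : Fin n → ℝ,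
            (starRingEnd ℂ) (Gfun n F N a q) * Gfun n F N (2 * b₀ - a) q)
            = ∫ q : Fin n → ℝ, (starRingEnd ℂ) (Gfun n F N b₀ q) * Gfun n F N b₀ q := by
          rw [Finset.sum_eq_single b₀]
          · rw [show (2 * b₀ - b₀ : ℤ) = b₀ by ring]
          · intro a _ hne
            rcases lt_or_gt_of_ne hne with hlt | hgt
            · rw [hvanb a hlt]; simp
            · have h2 : 2 * b₀ - a < b₀ := by omega
              rw [hvanb _ h2]; simp
          · intro hnot
            exact absurd (Finset.mem_Icc.mpr ⟨hNb, by omega⟩) hnot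
        rw [hsingle]
        have hre : (∫ q : Fin n → ℝ, (starRingEnd ℂ) (Gfun n F N b₀ q) * Gfun n F N b₀ q)
            = ((∫ q : Fin n → ℝ, Complex.normSq (Gfun n F N b₀ q) : ℝ) : ℂ) := by
          rw [show (fun q : Fin n → ℝ =>
              (starRingEnd ℂ) (Gfun n F N b₀ q) * Gfun n F N b₀ q)
            = fun q : Fin n → ℝ => ((Complex.normSq (Gfun n F N b₀ q) : ℝ) : ℂ) from
            funext fun q => by rw [mul_comm, Complex.mul_conj]]
          exact integral_ofReal
        rw [hre]
        simp only [Complex.ofReal_re]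
        have hcont : Continuous (Gfun n F N b₀) := Gfun_cont hsm b₀
        have hcsupp : HasCompactSupport (Gfun n F N b₀) := Gfun_hcs hcs b₀
        have hcont2 : Continuous fun q : Fin n → ℝ => Complex.normSq (Gfun n F N b₀ q) :=
          Complex.continuous_normSq.comp hcont
        have hint2 : MeasureTheory.Integrable
            (fun q : Fin n → ℝ => Complex.normSq (Gfun n F N b₀ q)) :=
          hcont2.integrable_of_hasCompactSupport
            (hcsupp.comp_left (g := Complex.normSq) (by simp))
        rw [MeasureTheory.integral_pos_iff_support_of_nonneg
          (fun q => Complex.normSq_nonneg _) hint2]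
        have hsupp_eq : Function.support (fun q : Fin n → ℝ =>
            Complex.normSq (Gfun n F N b₀ q)) = Function.support (Gfun n F N b₀) := by
          ext q
          simp [Function.mem_support, Complex.normSq_eq_zero]
        rw [hsupp_eq]
        have hopen : IsOpen (Function.support (Gfun n F N b₀)) :=
          isOpen_compl_singleton.preimage hcont
        have hne : (Function.support (Gfun n F N b₀)).Nonempty :=
          Function.support_nonempty_iff.mpr hb₀
        exact hopen.measure_pos MeasureTheory.volume hne
end
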